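/- Let f(t) be a primitive monic irreducible polynomial of degree d over the finite field F_q (i.e. its companion matrix [f] has multiplicative order q^d - 1). Let d' divide d, write d = d'·s, and let m' be a divisor of q^{d'} - 1 such that the multiplicative order of q modulo m' equals d'. Then for every positive integer l ≤ m' with gcd(l, m') = 1 there is a monic irreducible polynomial g(t) over F_q of degree d' and order m' such that g(t)^s = det(tE - [f]^{((q^d - 1)/m')·l}), i.e. g(t)^s is the characteristic polynomial of [f]^{((q^d-1)/m')·l}. -/

import Mathlib

/-- Entry (i,j) of the companion matrix of a monic polynomial
`f = a_0 + a_1 t + ... + a_{d-1} t^{d-1} + t^d`. -/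
def companionEntry {F : Type} [Field F] (d : ℕ) (f : Polynomial F) (i j : ℕ) : F :=
  if i = d - 1 then -f.coeff j else if j = i + 1 then 1 else 0

/-- The companion matrix of a monic polynomial of degree d: 1's on the
superdiagonal, last row `(-a_0, ..., -a_{d-1})`, 0's elsewhere. -/
def companionMatrix {F : Type} [Field F] (d : ℕ) (f : Polynomial F) :
    Matrix (Fin d) (Fin d) F :=
  Matrix.of fun i j => companionEntry d f (i : ℕ) (j : ℕ)

/-!
Identify `F[t]/(f)` with the field `K` of `q^d` elements and let `x` be the class of `t`. In the
power basis `1, x, …, x^(d-1)` the matrix of multiplication by `x` is `[f]ᵀ`, so `x` generates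
`Kˣ`, and `[f]^k` has the characteristic polynomial of multiplication by `β = x^k`. Over the
intermediate field `F(β)` this map is the scalar `β`, hence its characteristic polynomial over
`F` is `g^[K : F(β)]` with `g` the minimal polynomial of `β`, and `[g]` has the order of `β`.
For `k = ((q^d - 1)/m')·l`, `β` has order `m'`, and `deg g = [F(β) : F]`, the order of the
`q`-Frobenius of `F(β)`, is the least `e` with `β^(q^e) = β`, i.e. with `m' ∣ q^e - 1`.
-/

open Polynomial Matrix IntermediateField

lemma Matrix.orderOf_transpose {R n : Type*} [CommSemiring R] [Fintype n] [DecidableEq n]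
    (A : Matrix n n R) : orderOf Aᵀ = orderOf A :=
  orderOf_eq_orderOf_iff.2 fun k => by rw [← transpose_pow, transpose_eq_one]

section BlockDiagonal

variable {R m o : Type*} [CommRing R] [Fintype m] [DecidableEq m] [Fintype o] [DecidableEq o]

lemma Matrix.charmatrix_blockDiagonal (M : o → Matrix m m R) :
    charmatrix (blockDiagonal M) = blockDiagonal fun k => charmatrix (M k) := by
  rw [charmatrix, show (fun k => charmatrix (M k)) =
      (fun _ => scalar m (X : R[X])) - fun k => C.mapMatrix (M k) from rfl,
    blockDiagonal_sub, RingHom.mapMatrix_apply, blockDiagonal_map _ _ (map_zero C)]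
  congr 1
  simp

lemma Matrix.charpoly_blockDiagonal (M : o → Matrix m m R) :
    (blockDiagonal M).charpoly = ∏ k, (M k).charpoly := by
  rw [charpoly, charmatrix_blockDiagonal, det_blockDiagonal]
  rfl

end BlockDiagonal

lemma orderOf_pow_orderOf_div_mul {G : Type*} [Monoid G] {x : G} {m l : ℕ}
    (hx : orderOf x ≠ 0) (hm : m ∣ orderOf x) (hl : l.Coprime m) :
    orderOf (x ^ (orderOf x / m * l)) = m := by
  have hfin : IsOfFinOrder x := orderOf_pos_iff.mp (Nat.pos_of_ne_zero hx)
  obtain ⟨t, ht⟩ := hm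
  have hm0 : 0 < m := Nat.pos_of_ne_zero (left_ne_zero_of_mul (ht ▸ hx))
  have ht0 : 0 < t := Nat.pos_of_ne_zero (right_ne_zero_of_mul (ht ▸ hx))
  rw [hfin.orderOf_pow, ht, Nat.mul_div_cancel_left t hm0, mul_comm m t, Nat.gcd_mul_left,
    hl.symm.gcd_eq_one, mul_one, Nat.mul_div_cancel_left m ht0]

lemma Polynomial.X_pow_natDegree_modByMonic {R : Type*} [CommRing R] {h : R[X]} (hm : h.Monic) :
    X ^ h.natDegree %ₘ h = X ^ h.natDegree - h := by
  nontriviality R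
  have hdeg := degree_eq_natDegree hm.ne_zero
  refine (div_modByMonic_unique 1 _ hm ⟨by ring, ?_⟩).2
  have := degree_sub_lt_left (p := X ^ h.natDegree) (q := h) (by rw [degree_X_pow, hdeg])
    (monic_X_pow _).ne_zero (by rw [hm.leadingCoeff, leadingCoeff_X_pow])
  rwa [degree_X_pow, ← hdeg] at this

section Companion

variable {F : Type} [Field F] {h : F[X]}

lemma companionMatrix_eq_transpose_leftMulMatrix (hm : h.Monic) :
    companionMatrix h.natDegree h =
      (Algebra.leftMulMatrix (AdjoinRoot.powerBasisAux' hm) (AdjoinRoot.root h))ᵀ := by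
  ext i j
  have hbasis : AdjoinRoot.powerBasisAux' hm i = AdjoinRoot.mk h (X ^ (i : ℕ)) := by
    rw [map_pow, AdjoinRoot.mk_X]
    exact (AdjoinRoot.powerBasis' hm).basis_eq_pow i
  rw [transpose_apply, Algebra.leftMulMatrix_eq_repr_mul, hbasis, ← AdjoinRoot.mk_X, ← map_mul,
    ← pow_succ', AdjoinRoot.powerBasisAux'_repr_apply_to_fun, AdjoinRoot.modByMonicHom_mk]
  simp only [companionMatrix, of_apply, companionEntry]
  have hi := i.isLt
  by_cases hlast : (i : ℕ) = h.natDegree - 1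
  · rw [if_pos hlast, show (i : ℕ) + 1 = h.natDegree by omega, X_pow_natDegree_modByMonic hm,
      coeff_sub, coeff_X_pow, if_neg (by omega), zero_sub]
  · rw [if_neg hlast, (modByMonic_eq_self_iff hm).2, coeff_X_pow]
    rw [degree_X_pow, degree_eq_natDegree hm.ne_zero]
    exact_mod_cast (by omega : (i : ℕ) + 1 < h.natDegree)

lemma orderOf_companionMatrix (hm : h.Monic) :
    orderOf (companionMatrix h.natDegree h) = orderOf (AdjoinRoot.root h) := by
  rw [companionMatrix_eq_transpose_leftMulMatrix hm, orderOf_transpose]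
  exact orderOf_injective (Algebra.leftMulMatrix _).toMonoidHom
    (Algebra.leftMulMatrix_injective _) _

lemma charpoly_companionMatrix_pow (hm : h.Monic) (k : ℕ) :
    (companionMatrix h.natDegree h ^ k).charpoly =
      (Algebra.leftMulMatrix (AdjoinRoot.powerBasisAux' hm) (AdjoinRoot.root h ^ k)).charpoly := by
  rw [companionMatrix_eq_transpose_leftMulMatrix hm, ← transpose_pow, charpoly_transpose, map_pow]

end Companion

lemma charpoly_leftMulMatrix_eq_minpoly_pow {F K ι : Type*} [Field F] [Field K] [Algebra F K]
    [FiniteDimensional F K] [Fintype ι] [DecidableEq ι] (b : Module.Basis ι F K) (β : K) :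
    (Algebra.leftMulMatrix b β).charpoly = minpoly F β ^ Module.finrank F⟮β⟯ K := by
  set pb := adjoin.powerBasis (IsIntegral.of_finite F β)
  set c := Module.finBasis F⟮β⟯ K
  have hblock : Algebra.leftMulMatrix (pb.basis.smulTower c) β =
      blockDiagonal fun _ => Algebra.leftMulMatrix pb.basis pb.gen := by
    rw [← Algebra.smulTower_leftMulMatrix_algebraMap pb.basis c, adjoin.powerBasis_gen,
      AdjoinSimple.algebraMap_gen]
  rw [Algebra.leftMulMatrix_apply, LinearMap.charpoly_toMatrix,
    ← LinearMap.charpoly_toMatrix _ (pb.basis.smulTower c), ← Algebra.leftMulMatrix_apply, hblock,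
    charpoly_blockDiagonal, Finset.prod_const, Finset.card_univ, Fintype.card_fin,
    charpoly_leftMulMatrix, adjoin.powerBasis_gen, minpoly_gen]

section AdjoinSimple

variable {F K : Type*} [Field F] [Field K] [Algebra F K]

lemma IntermediateField.orderOf_adjoinSimple_gen (β : K) :
    orderOf (AdjoinSimple.gen F β) = orderOf β := by
  rw [← orderOf_injective (algebraMap F⟮β⟯ K).toMonoidHom (algebraMap F⟮β⟯ K).injective]
  exact congrArg orderOf (AdjoinSimple.algebraMap_gen F β)

lemma orderOf_root_minpoly {β : K} (hβ : IsIntegral F β) :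
    orderOf (AdjoinRoot.root (minpoly F β)) = orderOf β := by
  rw [← (adjoinRootEquivAdjoin F hβ : AdjoinRoot (minpoly F β) ≃* F⟮β⟯).orderOf_eq]
  exact (congrArg orderOf (adjoinRootEquivAdjoin_apply_root F hβ)).trans
    (orderOf_adjoinSimple_gen β)

lemma natDegree_minpoly_eq_of_isLeast [Fintype F] {β : K} (hβ : IsIntegral F β) {d : ℕ}
    (hd : IsLeast {e | 0 < e ∧ orderOf β ∣ Fintype.card F ^ e - 1} d) :
    (minpoly F β).natDegree = d := by
  set L := F⟮β⟯
  set γ := AdjoinSimple.gen F β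
  have : FiniteDimensional F L := adjoin.finiteDimensional hβ
  have : Finite L := Module.finite_of_finite F
  let : Fintype L := Fintype.ofFinite L
  have hγ : orderOf γ = orderOf β := orderOf_adjoinSimple_gen β
  have hγ0 : γ ≠ 0 := by
    refine (orderOf_pos_iff.mp ?_).isUnit.ne_zero
    rw [hγ]
    exact Nat.pos_of_dvd_of_pos hd.1.2
      (Nat.sub_pos_of_lt (Nat.one_lt_pow hd.1.1.ne' Fintype.one_lt_card))
  rw [← adjoin.finrank hβ]
  apply le_antisymm
  · have hfrob : FiniteField.frobeniusAlgHom F L ^ d = 1 := by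
      refine (adjoin.powerBasis hβ).algHom_ext ?_
      have hfix : γ ^ (Fintype.card F ^ d - 1) = 1 := orderOf_dvd_iff_pow_eq_one.mp (hγ ▸ hd.1.2)
      rw [adjoin.powerBasis_gen, AlgHom.coe_pow, FiniteField.coe_frobeniusAlgHom, pow_iterate,
        AlgHom.one_apply]
      dsimp only
      rw [← Nat.sub_add_cancel (Nat.one_le_pow _ _ Fintype.card_pos), pow_succ, hfix, one_mul]
    have := orderOf_dvd_of_pow_eq_one hfrob
    rw [FiniteField.orderOf_frobeniusAlgHom] at this
    exact Nat.le_of_dvd hd.1.1 this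
  · refine hd.2 ⟨Module.finrank_pos, ?_⟩
    rw [← hγ, ← Module.card_eq_pow_finrank]
    exact orderOf_dvd_of_pow_eq_one (FiniteField.pow_card_sub_one_eq_one γ hγ0)

end AdjoinSimple

theorem irreducible_factors_from_primitive_general
    (p n d d' s : ℕ)
    (F : Type) [Field F] [Fintype F] (hF : Fintype.card F = p ^ n)
    (f : Polynomial F) (hmonic : f.Monic) (hdeg : f.natDegree = d)
    (hirr : Irreducible f)
    (hprim : orderOf (companionMatrix d f) = (p ^ n) ^ d - 1)
    (hd's : d = d' * s)
    (m' : ℕ)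
    (hm'ord : IsLeast {e : ℕ | 0 < e ∧ m' ∣ (p ^ n) ^ e - 1} d')
    (l : ℕ) (hcop : Nat.Coprime l m') :
    ∃ g : Polynomial F, g.Monic ∧ Irreducible g ∧ g.natDegree = d' ∧
      orderOf (companionMatrix d' g) = m' ∧
      g ^ s = Matrix.charpoly (companionMatrix d f ^ (((p ^ n) ^ d - 1) / m' * l)) := by
  subst hdeg
  rw [← hF] at hprim hm'ord ⊢
  have : Fact (Irreducible f) := ⟨hirr⟩
  have : Module.Finite F (AdjoinRoot f) := (AdjoinRoot.powerBasis' hmonic).finite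
  have hK : Module.finrank F (AdjoinRoot f) = f.natDegree := (AdjoinRoot.powerBasis' hmonic).finrank
  set x := AdjoinRoot.root f
  have hx : orderOf x = Fintype.card F ^ f.natDegree - 1 := orderOf_companionMatrix hmonic ▸ hprim
  have hx0 : orderOf x ≠ 0 :=
    hx ▸ Nat.sub_ne_zero_of_lt (Nat.one_lt_pow hirr.natDegree_pos.ne' Fintype.one_lt_card)
  have hm' : m' ∣ orderOf x :=
    hx ▸ hm'ord.1.2.trans (Nat.pow_sub_one_dvd_pow_sub_one _ (Dvd.intro s hd's.symm))
  set β := x ^ (orderOf x / m' * l)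
  have hβ : orderOf β = m' := orderOf_pow_orderOf_div_mul hx0 hm' hcop
  have hβint : IsIntegral F β := .of_finite F β
  have hdeg : (minpoly F β).natDegree = d' := natDegree_minpoly_eq_of_isLeast hβint (hβ ▸ hm'ord)
  have hrank : Module.finrank F⟮β⟯ (AdjoinRoot f) = s := by
    have := Module.finrank_mul_finrank F F⟮β⟯ (AdjoinRoot f)
    rw [adjoin.finrank hβint, hdeg, hK, hd's] at this
    exact Nat.eq_of_mul_eq_mul_left hm'ord.1.1 this
  refine ⟨minpoly F β, minpoly.monic hβint, minpoly.irreducible hβint, hdeg, ?_, ?_⟩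
  · rw [← hdeg, orderOf_companionMatrix (minpoly.monic hβint), orderOf_root_minpoly hβint, hβ]
  · rw [← hx, charpoly_companionMatrix_pow hmonic, charpoly_leftMulMatrix_eq_minpoly_pow, hrank]

/-- Let f be a primitive monic irreducible polynomial of degree d
over F_q (its companion matrix [f] has multiplicative order q^d - 1).  Let d' ∣ d
with d = d'·s, and let m' be a divisor of q^{d'} - 1 such that the multiplicative
order of q modulo m' equals d'.  Then for every positive l ≤ m' with gcd(l,m') = 1
there is a monic irreducible polynomial g over F_q of degree d' and order m' with
g^s = det(tE - [f]^{((q^d-1)/m')·l}), the characteristic polynomial of that power. -/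
theorem irreducible_factors_from_primitive
    (p n d d' s : ℕ) (hp : p.Prime) (hn : 0 < n)
    (F : Type) [Field F] [Fintype F] (hF : Fintype.card F = p ^ n)
    (f : Polynomial F) (hmonic : f.Monic) (hdeg : f.natDegree = d)
    (hirr : Irreducible f)
    (hprim : orderOf (companionMatrix d f) = (p ^ n) ^ d - 1)
    (hd's : d = d' * s) (hd' : 0 < d')
    (m' : ℕ) (hm'dvd : m' ∣ (p ^ n) ^ d' - 1)
    (hm'ord : IsLeast {e : ℕ | 0 < e ∧ m' ∣ (p ^ n) ^ e - 1} d')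
    (l : ℕ) (hl : 0 < l) (hlm : l ≤ m') (hcop : Nat.Coprime l m') :
    ∃ g : Polynomial F, g.Monic ∧ Irreducible g ∧ g.natDegree = d' ∧
      orderOf (companionMatrix d' g) = m' ∧
      g ^ s = Matrix.charpoly (companionMatrix d f ^ (((p ^ n) ^ d - 1) / m' * l)) :=
  irreducible_factors_from_primitive_general p n d d' s F hF f hmonic hdeg hirr hprim hd's m' hm'ord
    l hcop
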